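/- arXiv:1903.12085 — 3 statements merged into one kernel-verified Lean document; each statement's English description precedes it below -/
import Mathlib

section
/- If a vertex v in the fringe set F has minimum tentative distance among all fringe vertices (i.e., d[v] = min over u in F of d[u]), then d[v] equals the true shortest-path distance dist(s,v). (Soundness of Dijkstra's selection criterion.) -/
open scoped ENNReal Classical
open Set

variable {V : Type*}

/-- Cost of a path (list of vertices): sum of edge costs of consecutive pairs. -/
noncomputable def pathCost (c : V → V → NNReal) (l : List V) : ℝ≥0∞ :=
  ((l.zip l.tail).map fun p => (c p.1 p.2 : ℝ≥0∞)).sum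

/-- `l` is a path from `s` to `v` following edges of `E`. -/
def IsPath (E : V → V → Prop) (s v : V) (l : List V) : Prop :=
  l.head? = some s ∧ l.getLast? = some v ∧ l.Chain' E

/-- A path from `s` to `v` all of whose intermediate vertices lie in `S`. -/
def IsSPath (E : V → V → Prop) (S : Set V) (s v : V) (l : List V) : Prop :=
  IsPath E s v l ∧ ∀ x ∈ l.dropLast.tail, x ∈ S

/-- Shortest-path distance from `s` to `v` (`∞` if unreachable). -/
noncomputable def gdist (E : V → V → Prop) (c : V → V → NNReal) (s v : V) : ℝ≥0∞ :=
  ⨅ l ∈ {l | IsPath E s v l}, pathCost c l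

/-- Shortest distance from `s` to `v` over paths with intermediates in `S`. -/
noncomputable def sdist (E : V → V → Prop) (c : V → V → NNReal) (S : Set V) (s v : V) : ℝ≥0∞ :=
  ⨅ l ∈ {l | IsSPath E S s v l}, pathCost c l

/-- The invariants of Dijkstra's algorithm for the partition `(S, F, U)` of the
vertex set with tentative distances `d`. -/
structure DijkstraInv (E : V → V → Prop) (c : V → V → NNReal) (s : V)
    (S F U : Set V) (d : V → ℝ≥0∞) : Prop where
  cover : S ∪ F ∪ U = univ
  disjSF : Disjoint S F
  disjSU : Disjoint S U
  disjFU : Disjoint F U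
  settled : ∀ u ∈ S, d u = gdist E c s u
  settledPath : ∀ u ∈ S, ∃ l, IsSPath E S s u l ∧ pathCost c l = d u
  fringe : ∀ u ∈ F, d u = sdist E c S s u ∧ ∃ l, IsSPath E S s u l
  unexplored : ∀ u ∈ U, ¬ ∃ l, IsSPath E S s u l

@[simp] lemma pathCost_cons_cons (c : V → V → NNReal) (x y : V) (t : List V) :
    pathCost c (x :: y :: t) = (c x y : ℝ≥0∞) + pathCost c (y :: t) := rfl

lemma pathCost_take (c : V → V → NNReal) : ∀ (l : List V) (n : ℕ),
    pathCost c (l.take n) ≤ pathCost c l := by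
  intro l
  induction l with
  | nil => intro n; simp [pathCost]
  | cons x xs ih =>
    intro n
    cases n with
    | zero => simp [pathCost]
    | succ m =>
      cases xs with
      | nil => simp
      | cons y t =>
        cases m with
        | zero => simp [pathCost]
        | succ k =>
          have h1 : (x :: y :: t).take (k + 1 + 1) = x :: (y :: t).take (k + 1) := rfl
          rw [h1]
          have h2 : (y :: t).take (k+1) = y :: t.take k := rfl
          rw [h2, pathCost_cons_cons, ← h2]
          exact add_le_add le_rfl (ih (k+1))

lemma sdist_le_pathCost {E : V → V → Prop} {c : V → V → NNReal} {S : Set V} {s v : V}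
    {l : List V} (h : IsSPath E S s v l) : sdist E c S s v ≤ pathCost c l :=
  iInf₂_le l h

lemma dv_le_path (E : V → V → Prop) (c : V → V → NNReal) (s : V)
    (S F U : Set V) (d : V → ℝ≥0∞) (hinv : DijkstraInv E c s S F U d)
    (v : V) (hv : v ∈ F) (hmin : d v = ⨅ u ∈ F, d u) :
    ∀ l, IsPath E s v l → d v ≤ pathCost c l := by
  intro l hl
  obtain ⟨hhead, hlast, hchain⟩ := hl
  have hne : l ≠ [] := by intro h; simp [h] at hhead
  have hvS : v ∉ S := fun hS => (Set.disjoint_left.mp hinv.disjSF hS) hv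
  by_cases hlen : l.length ≤ 1
  · -- l = [a] with a = s = v
    have h1 : l.length = 1 := le_antisymm hlen (List.length_pos_iff.mpr hne)
    obtain ⟨a, rfl⟩ := List.length_eq_one_iff.mp h1
    have has : a = s := by simpa using hhead
    have hav : a = v := by simpa using hlast
    have hsp : IsSPath E S s v [a] := ⟨⟨hhead, hlast, hchain⟩, by simp⟩
    calc d v = sdist E c S s v := (hinv.fringe v hv).1
      _ ≤ pathCost c [a] := sdist_le_pathCost hsp
  · push_neg at hlen
    have hlen2 : 2 ≤ l.length := hlen
    set P : ℕ → Prop := fun n => 1 ≤ n ∧ n < l.length ∧ l.getD n v ∉ S with hP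
    have hex : ∃ n, P n := by
      refine ⟨l.length - 1, by omega, by omega, ?_⟩
      have : l.getLast? = l[l.length - 1]? := List.getLast?_eq_getElem? (l := l)
      rw [hlast] at this
      simp [List.getD_eq_getElem?_getD, ← this, hvS]
    set i := Nat.find hex with hidef
    obtain ⟨hi1, hilen, hiS⟩ := Nat.find_spec hex
    have hminP : ∀ k, 1 ≤ k → k < i → l.getD k v ∈ S := by
      intro k hk1 hki
      by_contra hks
      exact Nat.find_min hex hki ⟨hk1, by omega, hks⟩
    set u := l.getD i v with hu
    set l' := l.take (i + 1) with hl'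
    have hgetu : l[i]? = some u := by
      rw [hu, List.getD_eq_getElem?_getD, List.getElem?_eq_getElem hilen]; rfl
    have hhead' : l'.head? = some s := by
      rw [hl', List.head?_take, if_neg (by omega), hhead]
    have hlast' : l'.getLast? = some u := by
      rw [hl', List.getLast?_take, if_neg (by omega)]
      simp [hgetu]
    have hchain' : l'.Chain' E := hchain.prefix (List.take_prefix _ _)
    have hint : ∀ x ∈ l'.dropLast.tail, x ∈ S := by
      intro x hx
      have hdl : l'.dropLast = l.take i := by
        rw [hl', List.dropLast_eq_take, List.length_take, List.take_take]
        congr 1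
        omega
      rw [hdl] at hx
      obtain ⟨j, hj, hjx⟩ := List.mem_iff_getElem.mp hx
      have hjlt : j + 1 < (l.take i).length := by
        simp only [List.length_tail] at hj; omega
      have hx2 : (l.take i)[j+1]'hjlt = x := by
        rw [← hjx, List.getElem_tail]
      have hjl : j + 1 < l.length := by
        simp only [List.length_take] at hjlt; omega
      have hxl : l[j+1]'hjl = x := by
        rw [← hx2, List.getElem_take]
      have hji : j + 1 < i := by
        simp only [List.length_take] at hjlt; omega
      have := hminP (j+1) (by omega) hji
      rwa [List.getD_eq_getElem?_getD, List.getElem?_eq_getElem hjl, Option.getD_some, hxl] at this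
    have hsp : IsSPath E S s u l' := ⟨⟨hhead', hlast', hchain'⟩, hint⟩
    have huU : u ∉ U := fun hU => hinv.unexplored u hU ⟨l', hsp⟩
    have huF : u ∈ F := by
      have huniv : u ∈ S ∪ F ∪ U := hinv.cover ▸ Set.mem_univ u
      rcases huniv with (hS | hF) | hU
      · exact absurd hS hiS
      · exact hF
      · exact absurd hU huU
    calc d v = ⨅ w ∈ F, d w := hmin
      _ ≤ d u := biInf_le d huF
      _ = sdist E c S s u := (hinv.fringe u huF).1
      _ ≤ pathCost c l' := sdist_le_pathCost hsp
      _ ≤ pathCost c l := pathCost_take c l (i+1)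

/-- Soundness of Dijkstra's selection criterion: a fringe vertex with minimum
tentative distance among fringe vertices has correct distance. -/
theorem dijk_criterion_sound (E : V → V → Prop) (c : V → V → NNReal) (s : V)
    (S F U : Set V) (d : V → ℝ≥0∞) (hinv : DijkstraInv E c s S F U d)
    (v : V) (hv : v ∈ F) (hmin : d v = ⨅ u ∈ F, d u) :
    d v = gdist E c s v := by
  apply le_antisymm
  · exact le_iInf₂ fun l hl => dv_le_path E c s S F U d hinv v hv hmin l hl
  · rw [(hinv.fringe v hv).1]
    exact le_iInf₂ fun l hl => iInf₂_le l hl.1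
end

section
/- Under the Dijkstra invariants, for every vertex w ∈ F, dist(s,w) ≥ min_{u∈F} d[u]. -/
open scoped ENNReal Classical
open Set

variable {V : Type*}

lemma pathCost_take_le (c : V → V → NNReal) (l : List V) (n : ℕ) :
    pathCost c (l.take n) ≤ pathCost c l := by
  induction l generalizing n with
  | nil => simp [pathCost]
  | cons a l ih =>
    cases n with
    | zero => simp [pathCost]
    | succ n =>
      cases l with
      | nil => simp
      | cons b l' =>
        cases n with
        | zero => simp [pathCost]
        | succ m =>
          have h := ih (m + 1)
          simp only [List.take, pathCost, List.zip, List.zipWith, List.tail,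
            List.map_cons, List.sum_cons] at h ⊢
          exact add_le_add_right h _
/-- Under the Dijkstra invariants, the true distance to any fringe vertex is at
least the minimum tentative distance over the fringe. -/
theorem fringe_dist_ge_min (E : V → V → Prop) (c : V → V → NNReal) (s : V)
    (S F U : Set V) (d : V → ℝ≥0∞) (hinv : DijkstraInv E c s S F U d)
    (w : V) (hw : w ∈ F) :
    (⨅ u ∈ F, d u) ≤ gdist E c s w := by
  rw [gdist]
  refine le_iInf₂ fun l hl => ?_
  obtain ⟨hhead, hlast, hchain⟩ := hl
  -- w ∉ S
  have hwS : w ∉ S := fun h => hinv.disjSF.ne_of_mem h hw rfl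
  -- split l at first vertex not in S
  classical
  set P : V → Bool := fun x => decide (x ∈ S) with hP
  have hsplit : l.takeWhile P ++ l.dropWhile P = l := List.takeWhile_append_dropWhile
  have hwmem : w ∈ l := by
    have : l ≠ [] := by rintro rfl; simp at hlast
    exact List.mem_of_getLast? hlast
  have hdne : l.dropWhile P ≠ [] := by
    intro h
    have : ∀ x ∈ l, P x := by
      intro x hx
      rw [← hsplit, h, List.append_nil] at hx
      exact List.mem_takeWhile_imp hx
    have := this w hwmem
    simp [hP] at this
    exact hwS this
  obtain ⟨u, r', hd⟩ := List.exists_cons_of_ne_nil hdne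
  have huS : u ∉ S := by
    have h2 := List.head_dropWhile_not P hdne
    have h3 : (l.dropWhile P).head hdne = u := by simp [hd]
    rw [h3] at h2
    simpa [hP] using h2
  -- the prefix path p
  set t := l.takeWhile P with ht
  set p := t ++ [u] with hp'
  have hlp : l = p ++ r' := by rw [hp', ← hsplit, hd]; simp
  have hptake : p = l.take (t.length + 1) := by
    rw [hlp, List.take_append]
    simp [hp']
  have hpne : p ≠ [] := by simp [hp']
  have hpS : IsSPath E S s u p := by
    refine ⟨⟨?_, ?_, ?_⟩, ?_⟩
    · rw [hlp, List.head?_append] at hhead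
      cases hph : p.head? with
      | none => exact absurd (List.head?_eq_none_iff.mp hph) hpne
      | some x => rw [hph] at hhead; simpa [hph] using hhead
    · exact List.getLast?_concat
    · rw [hptake]; exact hchain.take _
    · intro x hx
      have : x ∈ t := by
        have : p.dropLast = t := by simp [hp']
        rw [this] at hx
        exact List.mem_of_mem_tail hx
      have := List.mem_takeWhile_imp this
      simpa [hP] using this
  -- u ∉ U hence u ∈ F
  have huU : u ∉ U := fun h => hinv.unexplored u h ⟨p, hpS⟩
  have huF : u ∈ F := by
    have : u ∈ S ∪ F ∪ U := by rw [hinv.cover]; trivial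
    rcases this with (h | h) | h
    · exact absurd h huS
    · exact h
    · exact absurd h huU
  calc (⨅ u ∈ F, d u) ≤ d u := biInf_le d huF
    _ = sdist E c S s u := (hinv.fringe u huF).1
    _ ≤ pathCost c p := by rw [sdist]; exact iInf₂_le p hpS
    _ ≤ pathCost c l := by rw [hptake]; exact pathCost_take_le c l _
end

section
/- Under the Dijkstra invariants, if a shortest path from s to v ∈ F ends with edge (w,v) where w ∈ U, then the path contains at least two consecutive edges (w',w),(w,v) with both w' ∈ F ∪ U and w ∈ U outside of S. -/
open scoped ENNReal Classical
open Set

variable {V : Type*}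

private lemma mem_tail_cases {α : Type*} {m : List α} {x : α} (hx : x ∈ m.tail) :
    x ∈ m.dropLast.tail ∨ some x = m.getLast? := by
  induction m with
  | nil => simp at hx
  | cons a t ih =>
    rcases t.eq_nil_or_concat with rfl | ⟨t', b, rfl⟩
    all_goals try simp only [List.concat_eq_append] at *
    · simp at hx
    · simp only [List.tail_cons] at hx
      rw [List.mem_append] at hx
      rcases hx with hx | hx
      · left
        simp [List.dropLast_concat, List.dropLast, List.tail]
        rcases t' with _ | ⟨c, t''⟩
        · simp at hx
        · simpa using hx
      · right
        simp at hx
        subst hx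
        show some x = ((a :: t') ++ [x]).getLast?
        rw [List.getLast?_concat]

/-- If a shortest path from `s` to `v ∈ F` ends with an edge `(w, v)` with
`w ∈ U`, then the path contains two consecutive edges `(w', w), (w, v)` with
`w' ∈ F ∪ U` and `w ∈ U` outside of `S`. -/
theorem shortest_path_through_U_two_edges (E : V → V → Prop) (c : V → V → NNReal)
    (s : V) (S F U : Set V) (d : V → ℝ≥0∞) (hinv : DijkstraInv E c s S F U d)
    (v : V) (hv : v ∈ F) (l l₀ : List V) (w : V)
    (hpath : IsPath E s v l) (hshortest : pathCost c l = gdist E c s v)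
    (hdecomp : l = l₀ ++ [w, v]) (hw : w ∈ U) :
    ∃ (l₁ : List V) (w' : V), l = l₁ ++ [w', w, v] ∧ w' ∈ F ∪ U := by
  obtain ⟨hhead, hlast, hchain⟩ := hpath
  subst hdecomp
  rcases l₀.eq_nil_or_concat with rfl | ⟨l₁, w', rfl⟩
  all_goals try simp only [List.concat_eq_append] at *
  · -- l = [w, v], so w = s
    simp at hhead
    exact absurd ⟨[w], ⟨by simp [hhead], by simp, List.isChain_singleton w⟩, by simp⟩ (hinv.unexplored w hw)
  · refine ⟨l₁, w', by simp, ?_⟩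
    -- edge from w' to w
    have hsuf : [w', w, v] <:+ (l₁ ++ [w'] ++ [w, v]) := ⟨l₁, by simp⟩
    have hedge : E w' w := ((hchain.suffix hsuf).rel_head)
    -- w' ∉ S
    by_cases hS : w' ∈ S
    · exfalso
      obtain ⟨m, ⟨⟨mh, ml, mc⟩, mint⟩, _⟩ := hinv.settledPath w' hS
      have hmne : m ≠ [] := by rintro rfl; simp at mh
      apply hinv.unexplored w hw
      refine ⟨m ++ [w], ⟨?_, ?_, ?_⟩, ?_⟩
      · rcases m with _ | ⟨a, t⟩
        · simp at mh
        · simpa using mh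
      · simp
      · rw [List.Chain', List.isChain_append]
        refine ⟨mc, by simp, ?_⟩
        intro x hx y hy
        simp at hy
        rw [ml] at hx
        simp at hx
        rw [← hx, ← hy]
        exact hedge
      · intro x hx
        rw [List.dropLast_concat] at hx
        rcases mem_tail_cases hx with h | h
        · exact mint x h
        · rw [ml] at h
          simp at h
          rwa [h]
    · have := hinv.cover.symm ▸ (mem_univ w')
      rcases this with (h | h) | h
      · exact absurd h hS
      · exact Or.inl h
      · exact Or.inr h
end
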